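/- arXiv:2507.02482 — 2 statements merged into one kernel-verified Lean document; each statement's English description precedes it below -/
import Mathlib

section
/- Let m ≥ 1 and c > 0, let R : ℝ → (real m×m matrices) be continuous, and let U : ℝ → (real m×m matrices) be differentiable with U'(t) + U(t)² + R(t) = 0 for all t ≥ 0, such that for every t ≥ 0 the matrix U(t) is positive semidefinite and c·I − U(t) is positive semidefinite. Suppose the limit χ := lim_{t→∞} (1/t)∫₀ᵗ tr(U(s)) ds exists. Then −limsup_{t→∞} (1/t)∫₀ᵗ tr(R(s)) ds ≤ c·χ. -/
/-!
Taking traces in the Riccati equation gives `tr R = -(tr U)' - tr U²`, so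
`∫₀ᵗ tr R = tr U(0) - tr U(t) - ∫₀ᵗ tr U²`. The bounds `0 ≤ U ≤ c` give `0 ≤ tr U ≤ m c` and
`0 ≤ tr U² ≤ c tr U` (the latter is `tr (U (c - U)) ≥ 0`), hence
`-m c - c ∫₀ᵗ tr U ≤ ∫₀ᵗ tr R ≤ tr U(0)`. Dividing by `t`, the lower bound tends to `-c χ` and the
upper bound keeps the averages of `tr R` bounded above, so their limsup is at least `-c χ`.
-/

open MeasureTheory intervalIntegral Filter Matrix Set

namespace Matrix

open scoped ComplexOrder

variable {n 𝕜 : Type*} [Fintype n] [RCLike 𝕜]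

open scoped MatrixOrder in
lemma PosSemidef.trace_mul_nonneg {A B : Matrix n n 𝕜} (hA : A.PosSemidef) (hB : B.PosSemidef) :
    0 ≤ (A * B).trace := by
  classical
  have hS : (CFC.sqrt A)ᴴ = CFC.sqrt A := (CFC.sqrt_nonneg A).posSemidef.isHermitian.eq
  have hSBS := hB.mul_mul_conjTranspose_same (CFC.sqrt A)
  rw [hS] at hSBS
  rw [← CFC.sqrt_mul_sqrt_self A hA.nonneg, Matrix.mul_assoc, trace_mul_comm]
  exact hSBS.trace_nonneg

variable [DecidableEq n] {U : Matrix n n 𝕜} {c : 𝕜}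

lemma trace_le_of_posSemidef_smul_one_sub (h : (c • 1 - U).PosSemidef) :
    U.trace ≤ Fintype.card n * c := by
  simpa [trace_sub, trace_smul, mul_comm] using h.trace_nonneg

lemma trace_mul_self_le_of_posSemidef_smul_one_sub (hU : U.PosSemidef)
    (h : (c • 1 - U).PosSemidef) : (U * U).trace ≤ c * U.trace := by
  simpa [Matrix.mul_sub, trace_sub] using hU.trace_mul_nonneg h

end Matrix

lemma hasDerivAt_matrix_trace {n 𝕜 : Type*} [Fintype n] [NontriviallyNormedField 𝕜]
    {U : 𝕜 → Matrix n n 𝕜} {U' : Matrix n n 𝕜} {t : 𝕜}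
    (h : ∀ i, HasDerivAt (fun τ => U τ i i) (U' i i) t) :
    HasDerivAt (fun τ => (U τ).trace) U'.trace t := by
  simpa only [trace, diag] using HasDerivAt.fun_sum fun i _ => h i

section ScalarRiccati

variable {u q r : ℝ → ℝ} (hu : ∀ t, 0 ≤ t → HasDerivAt u (-(q t + r t)) t)
  (hq : Continuous q) (hr : Continuous r)
include hu hq hr

lemma integral_eq_sub_sub_integral_of_hasDerivAt_neg_add {t : ℝ} (ht : 0 ≤ t) :
    ∫ s in (0:ℝ)..t, r s = u 0 - u t - ∫ s in (0:ℝ)..t, q s := by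
  have hftc := integral_eq_sub_of_hasDerivAt (fun s hs => hu s (uIcc_of_le ht ▸ hs).1)
    ((hq.add hr).neg.intervalIntegrable 0 t)
  rw [intervalIntegral.integral_neg,
    integral_add (hq.intervalIntegrable 0 t) (hr.intervalIntegrable 0 t)] at hftc
  linarith

lemma integral_le_of_hasDerivAt_neg_add (hu₀ : ∀ t, 0 ≤ t → 0 ≤ u t)
    (hq₀ : ∀ t, 0 ≤ t → 0 ≤ q t) {t : ℝ} (ht : 0 ≤ t) : ∫ s in (0:ℝ)..t, r s ≤ u 0 := by
  have hq_int : 0 ≤ ∫ s in (0:ℝ)..t, q s := integral_nonneg ht fun s hs => hq₀ s hs.1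
  linarith [integral_eq_sub_sub_integral_of_hasDerivAt_neg_add hu hq hr ht, hu₀ t ht]

lemma le_integral_of_hasDerivAt_neg_add {M c : ℝ} (hu₀ : 0 ≤ u 0) (huM : ∀ t, 0 ≤ t → u t ≤ M)
    (hqu : ∀ t, 0 ≤ t → q t ≤ c * u t) {t : ℝ} (ht : 0 ≤ t) :
    -(c * ∫ s in (0:ℝ)..t, u s) - M ≤ ∫ s in (0:ℝ)..t, r s := by
  have hu_int : IntervalIntegrable u volume 0 t := ContinuousOn.intervalIntegrable
    fun s hs => (hu s (uIcc_of_le ht ▸ hs).1).continuousAt.continuousWithinAt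
  have hq_int : ∫ s in (0:ℝ)..t, q s ≤ c * ∫ s in (0:ℝ)..t, u s := by
    rw [← intervalIntegral.integral_const_mul]
    exact integral_mono_on ht (hq.intervalIntegrable 0 t) (hu_int.const_mul c)
      fun s hs => hqu s hs.1
  linarith [integral_eq_sub_sub_integral_of_hasDerivAt_neg_add hu hq hr ht, huM t ht]

end ScalarRiccati

lemma le_limsup_inv_mul_of_le_of_sub_le {F G : ℝ → ℝ} {A B L : ℝ}
    (hFA : ∀ᶠ t in atTop, F t ≤ A) (hGF : ∀ᶠ t in atTop, G t - B ≤ F t)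
    (hG : Tendsto (fun t => (1 / t) * G t) atTop (nhds L)) :
    L ≤ limsup (fun t => (1 / t) * F t) atTop := by
  have hlow : (fun t => (1 / t) * G t - B / t) ≤ᶠ[atTop] fun t => (1 / t) * F t := by
    filter_upwards [hGF, eventually_gt_atTop 0] with t ht htpos
    rw [div_eq_mul_one_div B, mul_comm B, ← mul_sub]
    exact mul_le_mul_of_nonneg_left ht (by positivity)
  have hup : (fun t => (1 / t) * F t) ≤ᶠ[atTop] fun t => A / t := by
    filter_upwards [hFA, eventually_gt_atTop 0] with t ht htpos
    rw [div_eq_mul_one_div A, mul_comm A]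
    exact mul_le_mul_of_nonneg_left ht (by positivity)
  have htend : Tendsto (fun t => (1 / t) * G t - B / t) atTop (nhds L) := by
    simpa using hG.sub (tendsto_const_nhds.div_atTop tendsto_id)
  rw [← htend.limsup_eq]
  exact limsup_le_limsup hlow htend.isCoboundedUnder_le
    ((tendsto_const_nhds.div_atTop tendsto_id).isBoundedUnder_le.mono_le hup)

theorem neg_limsup_avg_trace_R_le_general (m : ℕ) (c : ℝ)
    (R U U' : ℝ → Matrix (Fin m) (Fin m) ℝ)
    (hR : Continuous R)
    (hU : ∀ t, ∀ i j, HasDerivAt (fun τ => U τ i j) (U' t i j) t)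
    (hric : ∀ t, 0 ≤ t → U' t + U t * U t + R t = 0)
    (hpsd : ∀ t, 0 ≤ t → (U t).PosSemidef)
    (hle : ∀ t, 0 ≤ t → (c • (1 : Matrix (Fin m) (Fin m) ℝ) - U t).PosSemidef)
    (χ : ℝ)
    (hχ : Tendsto (fun t : ℝ => (1 / t) * ∫ s in (0:ℝ)..t, (U s).trace) atTop (nhds χ)) :
    -(limsup (fun t : ℝ => (1 / t) * ∫ s in (0:ℝ)..t, (R s).trace) atTop) ≤ c * χ := by
  have hUc : Continuous U := continuous_matrix fun i j =>
    continuous_iff_continuousAt.mpr fun t => (hU t i j).continuousAt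
  have htr_deriv : ∀ t, 0 ≤ t →
      HasDerivAt (fun τ => (U τ).trace) (-((U t * U t).trace + (R t).trace)) t := by
    intro t ht
    have hU' : U' t = -(U t * U t + R t) :=
      eq_neg_of_add_eq_zero_left (by rw [← add_assoc]; exact hric t ht)
    rw [← trace_add, ← trace_neg, ← hU']
    exact hasDerivAt_matrix_trace fun i => hU t i i
  have htrUU := (hUc.matrix_mul hUc).matrix_trace
  have htrR := hR.matrix_trace
  have hupper : ∀ᶠ t in atTop, ∫ s in (0:ℝ)..t, (R s).trace ≤ (U 0).trace :=
    eventually_ge_atTop 0 |>.mono fun t =>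
      integral_le_of_hasDerivAt_neg_add htr_deriv htrUU htrR (fun s hs => (hpsd s hs).trace_nonneg)
        fun s hs => PosSemidef.trace_mul_nonneg (hpsd s hs) (hpsd s hs)
  have hlower : ∀ᶠ t in atTop,
      -(c * ∫ s in (0:ℝ)..t, (U s).trace) - m * c ≤ ∫ s in (0:ℝ)..t, (R s).trace :=
    eventually_ge_atTop 0 |>.mono fun t =>
      le_integral_of_hasDerivAt_neg_add htr_deriv htrUU htrR (hpsd 0 le_rfl).trace_nonneg
        (fun s hs => by simpa using trace_le_of_posSemidef_smul_one_sub (hle s hs))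
        fun s hs => trace_mul_self_le_of_posSemidef_smul_one_sub (hpsd s hs) (hle s hs)
  have hχc : Tendsto (fun t : ℝ => (1 / t) * -(c * ∫ s in (0:ℝ)..t, (U s).trace))
      atTop (nhds (-(c * χ))) := by
    simpa only [mul_neg, neg_mul, mul_left_comm (1 / _) c] using (hχ.const_mul c).neg
  exact neg_le.mp (le_limsup_inv_mul_of_le_of_sub_le hupper hlower hχc)

/-- Left inequality of Lemma 3.1: for a bounded Riccati solution `0 ≤ U(t) ≤ c • I` with
`c > 0`, if `χ = lim (1/t) ∫₀ᵗ tr U` exists, then `-limsup (1/t) ∫₀ᵗ tr R ≤ c * χ`. -/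
theorem neg_limsup_avg_trace_R_le (m : ℕ) (hm : 1 ≤ m) (c : ℝ) (hc : 0 < c)
    (R U U' : ℝ → Matrix (Fin m) (Fin m) ℝ)
    (hR : Continuous R)
    (hU : ∀ t, ∀ i j, HasDerivAt (fun τ => U τ i j) (U' t i j) t)
    (hric : ∀ t, 0 ≤ t → U' t + U t * U t + R t = 0)
    (hpsd : ∀ t, 0 ≤ t → (U t).PosSemidef)
    (hle : ∀ t, 0 ≤ t → (c • (1 : Matrix (Fin m) (Fin m) ℝ) - U t).PosSemidef)
    (χ : ℝ)
    (hχ : Tendsto (fun t : ℝ => (1 / t) * ∫ s in (0:ℝ)..t, (U s).trace) atTop (nhds χ)) :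
    -(limsup (fun t : ℝ => (1 / t) * ∫ s in (0:ℝ)..t, (R s).trace) atTop) ≤ c * χ :=
  neg_limsup_avg_trace_R_le_general m c R U U' hR hU hric hpsd hle χ hχ
end

section
/- Let m ≥ 1 and c ≥ 0, let R : ℝ → (real m×m matrices) be continuous, and let U : ℝ → (real m×m matrices) be differentiable with U'(t) + U(t)² + R(t) = 0 for all t ≥ 0, such that for every t ≥ 0 the matrix U(t) is positive semidefinite and c·I − U(t) is positive semidefinite. Then liminf_{t→∞} (1/t)∫₀ᵗ tr(R(s)) ds ≤ 0. -/
/-!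
Taking traces in `U' + U² + R = 0` shows that `t ↦ tr U(t) + ∫₀ᵗ tr R` has derivative
`-tr(U(t)²) ≤ 0`, since `U(t)` is symmetric. Hence it is antitone on `[0, ∞)`, and as
`tr U(t) ≥ 0` we get `∫₀ᵗ tr R ≤ tr U(0)`. The averages are then at most `tr U(0) / t → 0`.
-/

open MeasureTheory intervalIntegral Filter Topology

theorem Matrix.IsHermitian.trace_mul_self_nonneg {n R : Type*} [Fintype n] [CommRing R]
    [PartialOrder R] [StarRing R] [StarOrderedRing R] {A : Matrix n n R} (hA : A.IsHermitian) :
    0 ≤ (A * A).trace := by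
  simpa only [hA.eq] using (Matrix.posSemidef_conjTranspose_mul_self A).trace_nonneg

theorem Matrix.hasDerivAt_trace {n 𝕜 : Type*} [Fintype n] [NontriviallyNormedField 𝕜]
    {U : 𝕜 → Matrix n n 𝕜} {A : Matrix n n 𝕜} {t : 𝕜}
    (hU : ∀ i, HasDerivAt (fun τ => U τ i i) (A i i) t) :
    HasDerivAt (fun τ => (U τ).trace) A.trace t :=
  HasDerivAt.fun_sum fun i _ => hU i

/-- A real `liminf` is the junk value `0` when the function is not eventually bounded below,
hence the assumption `0 ≤ a`. -/
theorem Real.liminf_le_of_eventually_le_of_tendsto {ι : Type*} {f : Filter ι} [f.NeBot]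
    {u v : ι → ℝ} {a : ℝ} (huv : u ≤ᶠ[f] v) (hv : Tendsto v f (𝓝 a)) (ha : 0 ≤ a) :
    liminf u f ≤ a := by
  refine Real.sSup_le (fun b hb => ge_of_tendsto hv ?_) ha
  filter_upwards [hb, huv] with x hbx hx using hbx.trans hx

section Riccati

variable {n : Type*} [Fintype n] {R U U' : ℝ → Matrix n n ℝ}

theorem antitoneOn_trace_add_integral_trace_of_riccati (hR : Continuous R)
    (hU : ∀ t, ∀ i j, HasDerivAt (fun τ => U τ i j) (U' t i j) t)
    (hric : ∀ t, 0 ≤ t → U' t + U t * U t + R t = 0)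
    (hsymm : ∀ t, 0 ≤ t → (U t).IsHermitian) :
    AntitoneOn (fun t => (U t).trace + ∫ s in (0 : ℝ)..t, (R s).trace) (Set.Ici 0) := by
  have hderiv : ∀ t, HasDerivAt (fun t => (U t).trace + ∫ s in (0 : ℝ)..t, (R s).trace)
      ((U' t).trace + (R t).trace) t := fun t =>
    (Matrix.hasDerivAt_trace fun i => hU t i i).add
      (hR.matrix_trace.integral_hasStrictDerivAt 0 t).hasDerivAt
  refine antitoneOn_of_hasDerivWithinAt_nonpos (convex_Ici 0)
    (fun t _ => (hderiv t).continuousAt.continuousWithinAt)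
    (fun t _ => (hderiv t).hasDerivWithinAt) fun t ht => ?_
  rw [interior_Ici, Set.mem_Ioi] at ht
  have hU't : U' t = -(U t * U t) - R t := by
    rw [← sub_eq_zero, ← hric t ht.le]; abel
  have hsq := (hsymm t ht.le).trace_mul_self_nonneg
  rw [hU't, Matrix.trace_sub, Matrix.trace_neg]
  linarith

theorem integral_trace_le_trace_zero_of_riccati (hR : Continuous R)
    (hU : ∀ t, ∀ i j, HasDerivAt (fun τ => U τ i j) (U' t i j) t)
    (hric : ∀ t, 0 ≤ t → U' t + U t * U t + R t = 0)
    (hpsd : ∀ t, 0 ≤ t → (U t).PosSemidef) {t : ℝ} (ht : 0 ≤ t) :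
    ∫ s in (0 : ℝ)..t, (R s).trace ≤ (U 0).trace := by
  have hanti := antitoneOn_trace_add_integral_trace_of_riccati hR hU hric
    (fun s hs => (hpsd s hs).1) Set.self_mem_Ici ht ht
  have htrace := (hpsd t ht).trace_nonneg
  simp only [integral_same, add_zero] at hanti
  linarith

end Riccati

theorem liminf_avg_trace_R_nonpos_general (m : ℕ)
    (R U U' : ℝ → Matrix (Fin m) (Fin m) ℝ)
    (hR : Continuous R)
    (hU : ∀ t, ∀ i j, HasDerivAt (fun τ => U τ i j) (U' t i j) t)
    (hric : ∀ t, 0 ≤ t → U' t + U t * U t + R t = 0)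
    (hpsd : ∀ t, 0 ≤ t → (U t).PosSemidef) :
    liminf (fun t : ℝ => (1 / t) * ∫ s in (0:ℝ)..t, (R s).trace) atTop ≤ 0 := by
  have hbound : ∀ᶠ t : ℝ in atTop,
      (1 / t) * ∫ s in (0:ℝ)..t, (R s).trace ≤ (U 0).trace / t := by
    filter_upwards [eventually_gt_atTop 0] with t ht
    rw [one_div_mul_eq_div]
    exact div_le_div_of_nonneg_right
      (integral_trace_le_trace_zero_of_riccati hR hU hric hpsd ht.le) ht.le
  exact Real.liminf_le_of_eventually_le_of_tendsto hbound
    (tendsto_const_nhds.div_atTop tendsto_id) le_rfl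

/-- For a bounded Riccati solution `0 ≤ U(t) ≤ c • I` of `U' + U² + R = 0`, the lower
asymptotic average of `tr R` is nonpositive. -/
theorem liminf_avg_trace_R_nonpos (m : ℕ) (hm : 1 ≤ m) (c : ℝ) (hc : 0 ≤ c)
    (R U U' : ℝ → Matrix (Fin m) (Fin m) ℝ)
    (hR : Continuous R)
    (hU : ∀ t, ∀ i j, HasDerivAt (fun τ => U τ i j) (U' t i j) t)
    (hric : ∀ t, 0 ≤ t → U' t + U t * U t + R t = 0)
    (hpsd : ∀ t, 0 ≤ t → (U t).PosSemidef)
    (hle : ∀ t, 0 ≤ t → (c • (1 : Matrix (Fin m) (Fin m) ℝ) - U t).PosSemidef) :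
    liminf (fun t : ℝ => (1 / t) * ∫ s in (0:ℝ)..t, (R s).trace) atTop ≤ 0 :=
  liminf_avg_trace_R_nonpos_general m R U U' hR hU hric hpsd
end
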